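/- arXiv:1311.6201 — 2 statements merged into one kernel-verified Lean document; each statement's English description precedes it below -/
import Mathlib

section
/- If G is a finite group with G/Z(G) isomorphic to the dihedral group D18 of order 18, then |Cent(G)| = 11. -/
/-!
Every nontrivial element of `D₁₈ = DihedralGroup 9` has a cyclic centralizer: `⟨r⟩` for a rotation,
`⟨s rⁱ⟩` for a reflection (because `9` is odd). A group that is cyclic modulo a central subgroup
is abelian, so for `π : G → G/Z(G) ≅ D₁₈` the preimage of `C(π x)` is an abelian subgroup
containing `x`, hence equals `C_G(x)`. Thus taking preimages is a bijection
`Cent(D₁₈) → Cent(G)`, and `Cent(D₁₈)` consists of `D₁₈`, `⟨r⟩` and the nine `⟨s rⁱ⟩`.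
-/

/-- The set of distinct centralizers of elements of `G`. -/
def Cent (G : Type*) [Group G] : Set (Subgroup G) :=
  Set.range fun x : G => Subgroup.centralizer {x}

open Subgroup DihedralGroup

namespace Subgroup

variable {G H : Type*} [Group G] [Group H]

theorem centralizer_singleton_le_comap (f : G →* H) (x : G) :
    centralizer {x} ≤ (centralizer {f x}).comap f := fun y hy => by
  rw [mem_comap, mem_centralizer_singleton_iff, ← map_mul, mem_centralizer_singleton_iff.mp hy,
    map_mul]

theorem isMulCommutative_comap_of_ker_le_center (f : G →* H) (hf : f.ker ≤ center G)
    (K : Subgroup H) [IsCyclic K] : IsMulCommutative (K.comap f) :=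
  (f.subgroupComap K).isMulCommutative_of_isCyclic_of_ker_le_center fun x hx =>
    mem_center_iff.mpr fun y => Subtype.ext <|
      mem_center_iff.mp (hf (Subtype.ext_iff.mp hx : f x = 1)) y

theorem centralizer_singleton_eq_comap_of_ker_le_center (f : G →* H) (hf : f.ker ≤ center G)
    (hcyc : ∀ y : H, y ≠ 1 → IsCyclic (centralizer {y})) (x : G) :
    centralizer {x} = (centralizer {f x}).comap f := by
  by_cases hx : f x = 1
  · rw [centralizer_eq_top_iff_subset.mpr (Set.singleton_subset_iff.mpr (hf hx)), hx,
      centralizer_eq_top_iff_subset.mpr (Set.singleton_subset_iff.mpr (one_mem _)), comap_top]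
  · refine le_antisymm (centralizer_singleton_le_comap f x) fun y hy => ?_
    have := hcyc (f x) hx
    have hcomm := isMulCommutative_comap_of_ker_le_center f hf (centralizer {f x})
    have hxK : x ∈ (centralizer {f x}).comap f := by simp [mem_centralizer_singleton_iff]
    exact mem_centralizer_singleton_iff.mpr
      (congrArg Subtype.val (hcomm.is_comm.comm (⟨y, hy⟩ : (centralizer {f x}).comap f) ⟨x, hxK⟩))

end Subgroup

theorem ncard_cent_eq_of_surjective_of_ker_le_center {G H : Type*} [Group G] [Group H]
    (f : G →* H) (hsurj : Function.Surjective f) (hf : f.ker ≤ center G)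
    (hcyc : ∀ y : H, y ≠ 1 → IsCyclic (centralizer {y})) :
    (Cent G).ncard = (Cent H).ncard := by
  have hCent : Cent G = comap f '' Cent H := by
    ext K
    constructor
    · rintro ⟨x, rfl⟩
      exact ⟨_, ⟨f x, rfl⟩, (centralizer_singleton_eq_comap_of_ker_le_center f hf hcyc x).symm⟩
    · rintro ⟨_, ⟨y, rfl⟩, rfl⟩
      obtain ⟨x, rfl⟩ := hsurj y
      exact ⟨x, centralizer_singleton_eq_comap_of_ker_le_center f hf hcyc x⟩
  rw [hCent, Set.ncard_image_of_injective _ (comap_injective hsurj)]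

namespace DihedralGroup

variable {n : ℕ}

theorem r_mem_zpowers_r_one (i : ZMod n) : r i ∈ zpowers (r 1 : DihedralGroup n) := by
  obtain ⟨k, rfl⟩ := ZMod.intCast_surjective i
  exact ⟨k, r_one_zpow k⟩

theorem centralizer_r (hn : Odd n) {i : ZMod n} (hi : i ≠ 0) :
    centralizer {r i} = zpowers (r 1 : DihedralGroup n) := by
  refine le_antisymm (fun y hy => ?_) (zpowers_le.mpr ?_)
  · rcases y with j | j
    · exact r_mem_zpowers_r_one j
    · rw [mem_centralizer_singleton_iff, sr_mul_r, r_mul_sr, sr.injEq, sub_eq_add_neg,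
        add_left_cancel_iff, eq_neg_iff_add_eq_zero, ZMod.add_self_eq_zero_iff_eq_zero hn] at hy
      exact absurd hy hi
  · rw [mem_centralizer_singleton_iff, r_mul_r, r_mul_r, add_comm]

theorem sr_commute_sr_iff (hn : Odd n) (i j : ZMod n) : sr i * sr j = sr j * sr i ↔ i = j := by
  rw [sr_mul_sr, sr_mul_sr, r.injEq, ← neg_sub, neg_eq_iff_add_eq_zero,
    ZMod.add_self_eq_zero_iff_eq_zero hn, sub_eq_zero]

theorem centralizer_sr (hn : Odd n) (i : ZMod n) :
    centralizer {sr i} = zpowers (sr i : DihedralGroup n) := by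
  refine le_antisymm (fun y hy => ?_) (zpowers_le.mpr (mem_centralizer_singleton_iff.mpr rfl))
  rw [mem_centralizer_singleton_iff] at hy
  rcases y with j | j
  · rw [r_mul_sr, sr_mul_r, sr.injEq, sub_eq_add_neg, add_left_cancel_iff,
      neg_eq_iff_add_eq_zero, ZMod.add_self_eq_zero_iff_eq_zero hn] at hy
    rw [hy, r_zero]
    exact one_mem _
  · rw [(sr_commute_sr_iff hn j i).mp hy]
    exact mem_zpowers _

theorem isCyclic_centralizer (hn : Odd n) {y : DihedralGroup n} (hy : y ≠ 1) :
    IsCyclic (centralizer {y}) := by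
  rcases y with i | i
  · rw [centralizer_r hn (fun hi => hy (by rw [hi, r_zero]))]
    infer_instance
  · rw [centralizer_sr hn]
    infer_instance

theorem cent_eq_of_odd (hn : Odd n) (h1 : n ≠ 1) :
    Cent (DihedralGroup n) =
      insert ⊤ (insert (zpowers (r 1)) (Set.range fun i => zpowers (sr i))) := by
  have : Fact (1 < n) := ⟨by have := hn.pos; omega⟩
  have hone : centralizer {(1 : DihedralGroup n)} = ⊤ :=
    centralizer_eq_top_iff_subset.mpr (Set.singleton_subset_iff.mpr (one_mem _))
  ext K
  constructor
  · rintro ⟨x | i, rfl⟩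
    · by_cases hx : x = 0
      · left
        rw [hx, r_zero]
        exact hone
      · exact .inr (.inl (centralizer_r hn hx))
    · exact .inr (.inr ⟨i, (centralizer_sr hn i).symm⟩)
  · rintro (rfl | rfl | ⟨i, rfl⟩)
    · exact ⟨1, hone⟩
    · exact ⟨r 1, centralizer_r hn one_ne_zero⟩
    · exact ⟨sr i, centralizer_sr hn i⟩

theorem ncard_cent_of_odd (hn : Odd n) (h1 : n ≠ 1) : (Cent (DihedralGroup n)).ncard = n + 2 := by
  have : NeZero n := ⟨hn.pos.ne'⟩
  have hcard {K L : Subgroup (DihedralGroup n)} (h : K = L) : Nat.card K = Nat.card L := h ▸ rfl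
  have hinj : Function.Injective fun i : ZMod n => zpowers (sr i) := by
    intro i j (hij : zpowers (sr i) = zpowers (sr j))
    have hmem : sr i ∈ centralizer {sr j} := by
      rw [centralizer_sr hn, ← hij]
      exact mem_zpowers _
    exact (sr_commute_sr_iff hn i j).mp (mem_centralizer_singleton_iff.mp hmem)
  have hr_not_mem : zpowers (r 1) ∉ Set.range fun i : ZMod n => zpowers (sr i) := by
    rintro ⟨i, hi⟩
    have := hcard hi
    rw [Nat.card_zpowers, Nat.card_zpowers, orderOf_sr, orderOf_r_one] at this
    exact hn.not_two_dvd_nat (this ▸ dvd_refl 2)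
  have htop_not_mem : (⊤ : Subgroup (DihedralGroup n)) ∉
      insert (zpowers (r 1)) (Set.range fun i => zpowers (sr i)) := by
    have := hn.pos
    rintro (h | ⟨i, h⟩)
    · have := hcard h
      rw [card_top, nat_card, Nat.card_zpowers, orderOf_r_one] at this
      omega
    · have := hcard h
      rw [card_top, nat_card, Nat.card_zpowers, orderOf_sr] at this
      omega
  rw [cent_eq_of_odd hn h1, Set.ncard_insert_of_notMem htop_not_mem,
    Set.ncard_insert_of_notMem hr_not_mem, Set.ncard_range_of_injective hinj, Nat.card_zmod]

end DihedralGroup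

theorem stmt14_general (G : Type*) [Group G]
    (h : Nonempty ((G ⧸ Subgroup.center G) ≃* DihedralGroup 9)) :
    (Cent G).ncard = 11 := by
  obtain ⟨φ⟩ := h
  have hodd : Odd 9 := by decide
  rw [ncard_cent_eq_of_surjective_of_ker_le_center
      ((φ : G ⧸ center G →* DihedralGroup 9).comp (QuotientGroup.mk' (center G)))
      (φ.surjective.comp (QuotientGroup.mk'_surjective _))
      (fun x hx => by simpa using hx)
      (fun y hy => isCyclic_centralizer hodd hy),
    ncard_cent_of_odd hodd (by decide)]

theorem stmt14 (G : Type*) [Group G] [Finite G]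
    (h : Nonempty ((G ⧸ Subgroup.center G) ≃* DihedralGroup 9)) :
    (Cent G).ncard = 11 :=
  stmt14_general G h
end

section
/- If G is a finite group with |Cent(G)| = 9, then G is a CA-group: C_G(x) is abelian for every x ∈ G \ Z(G). -/
/-!
Suppose some noncentral `x` has noncommuting `a, b ∈ C(x)`; enlarging `C(x)`, we may take it to be a
maximal proper centralizer. If some noncentral `c ∈ C(x)` has `C(c) ⊄ C(x)`, then `x` and `c`
commute but have incomparable centralizers; with `u ∈ C(c) \ C(x)` and `v ∈ C(x) \ C(c)`, sorting
the centralizers of `1, c, x, xc, v, cv, u, xu, vu, xvu` by which of `x`, `c`, `u` they contain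
shows that these ten are distinct. Otherwise, for `g ∉ C(x)`, sending `C(d)` (with `d ∈ C(x)`) to
`C(dg)` is injective: `C(dg) = C(d'g)` puts `dd'⁻¹` into `C(d'g)`, and `dd'⁻¹` is either central or
has its centralizer inside `C(x)`, which would force `g ∈ C(x)`. So at least as many centralizers
avoid `x` as contain it, and `G`, `C(x)`, `C(a)`, `C(b)`, `C(ab)` contain it.
-/

namespace Set

lemma ncard_sep_add_ncard_sep_not {α : Type*} (s : Set α) (p : α → Prop)
    (hs : s.Finite := by toFinite_tac) :
    {a ∈ s | p a}.ncard + {a ∈ s | ¬p a}.ncard = s.ncard :=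
  ncard_inter_add_ncard_sdiff_eq_ncard s {a | p a} hs

lemma two_le_ncard_of_ne {α : Type*} {s : Set α} {a b : α} (ha : a ∈ s) (hb : b ∈ s)
    (hab : a ≠ b) (hs : s.Finite := by toFinite_tac) : 2 ≤ s.ncard :=
  (one_lt_ncard hs).2 ⟨a, ha, b, hb, hab⟩

lemma one_le_ncard_of_mem {α : Type*} {s : Set α} {a : α} (ha : a ∈ s)
    (hs : s.Finite := by toFinite_tac) : 1 ≤ s.ncard :=
  (ncard_pos hs).2 ⟨a, ha⟩

end Set

open Subgroup

section

variable {G : Type*} [Group G]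

lemma mem_centralizer_singleton_comm {g k : G} : k ∈ centralizer {g} ↔ g ∈ centralizer {k} := by
  simp only [mem_centralizer_singleton_iff, eq_comm]

lemma self_mem_centralizer_singleton (g : G) : g ∈ centralizer {g} :=
  mem_centralizer_singleton_iff.2 rfl

lemma centralizer_singleton_eq_top_iff {g : G} : centralizer {g} = ⊤ ↔ g ∈ center G := by
  rw [centralizer_eq_top_iff_subset, Set.singleton_subset_iff, SetLike.mem_coe]

lemma top_mem_cent : (⊤ : Subgroup G) ∈ Cent G :=
  ⟨1, centralizer_singleton_eq_top_iff.2 (one_mem _)⟩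

lemma centralizer_singleton_mem_cent (g : G) : centralizer {g} ∈ Cent G := ⟨g, rfl⟩

lemma centralizer_singleton_eq_of_mul_inv_mem_center {p q : G} (h : p * q⁻¹ ∈ center G) :
    centralizer {p} = centralizer {q} := by
  ext k
  have hk : p * q⁻¹ ∈ centralizer {k} := center_le_centralizer _ h
  calc k ∈ centralizer {p} ↔ p * q⁻¹ * q ∈ centralizer {k} := by
        rw [inv_mul_cancel_right, mem_centralizer_singleton_comm]
    _ ↔ k ∈ centralizer {q} := by rw [mul_mem_cancel_left hk, mem_centralizer_singleton_comm]

lemma mul_inv_mem_centralizer_of_centralizer_eq {p q : G}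
    (h : centralizer {p} = centralizer {q}) : p * q⁻¹ ∈ centralizer {q} :=
  mul_mem (h ▸ self_mem_centralizer_singleton p) (inv_mem (self_mem_centralizer_singleton q))

lemma mem_centralizer_mul_left_iff {g p q : G} (hp : p ∈ centralizer {g}) :
    g ∈ centralizer {p * q} ↔ g ∈ centralizer {q} := by
  rw [mem_centralizer_singleton_comm, mul_mem_cancel_left hp, mem_centralizer_singleton_comm]

lemma mem_centralizer_mul_right_iff {g p q : G} (hq : q ∈ centralizer {g}) :
    g ∈ centralizer {p * q} ↔ g ∈ centralizer {p} := by
  rw [mem_centralizer_singleton_comm, mul_mem_cancel_right hq, mem_centralizer_singleton_comm]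

theorem ten_le_ncard_cent_of_not_le_of_not_le (hfin : (Cent G).Finite) {x a : G}
    (hax : a ∈ centralizer {x}) (hnle : ¬centralizer {x} ≤ centralizer {a})
    (hnge : ¬centralizer {a} ≤ centralizer {x}) : 10 ≤ (Cent G).ncard := by
  have := hfin.to_subtype
  obtain ⟨b, hbx, hba⟩ := SetLike.not_le_iff_exists.1 hnle
  obtain ⟨u, hua, hux⟩ := SetLike.not_le_iff_exists.1 hnge
  have hxa : x ∈ centralizer {a} := mem_centralizer_singleton_comm.1 hax
  have hxb : x ∈ centralizer {b} := mem_centralizer_singleton_comm.1 hbx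
  have hab : a ∉ centralizer {b} := mt mem_centralizer_singleton_comm.1 hba
  have hxu : x ∉ centralizer {u} := mt mem_centralizer_singleton_comm.1 hux
  have hau : a ∈ centralizer {u} := mem_centralizer_singleton_comm.1 hua
  have hxbu : x ∉ centralizer {b * u} := mt (mem_centralizer_mul_left_iff hbx).1 hxu
  have habu : a ∉ centralizer {b * u} := mt (mem_centralizer_mul_right_iff hua).1 hab
  have hx := self_mem_centralizer_singleton x
  have hcent := centralizer_singleton_mem_cent (G := G)
  rw [← Set.ncard_sep_add_ncard_sep_not _ (x ∈ ·),
    ← Set.ncard_sep_add_ncard_sep_not {D ∈ Cent G | x ∈ D} (a ∈ ·),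
    ← Set.ncard_sep_add_ncard_sep_not {D ∈ Cent G | x ∉ D} (a ∈ ·),
    ← Set.ncard_sep_add_ncard_sep_not {D ∈ {D ∈ Cent G | x ∈ D} | a ∈ D} (u ∈ ·)]
  refine le_trans (le_of_eq (by norm_num : 10 = 2 + 2 + 2 + (2 + 2)))
    (add_le_add (add_le_add (add_le_add ?_ ?_) ?_) (add_le_add ?_ ?_))
  · exact Set.two_le_ncard_of_ne ⟨⟨⟨top_mem_cent, mem_top x⟩, mem_top a⟩, mem_top u⟩
      ⟨⟨⟨hcent a, hxa⟩, self_mem_centralizer_singleton a⟩, hua⟩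
      (ne_of_mem_of_not_mem' (mem_top b) hba)
  · exact Set.two_le_ncard_of_ne ⟨⟨⟨hcent x, hx⟩, hax⟩, hux⟩
      ⟨⟨⟨hcent (x * a), (mem_centralizer_mul_left_iff hx).2 hxa⟩,
        (mem_centralizer_mul_right_iff (self_mem_centralizer_singleton a)).2 hax⟩,
        mt (mem_centralizer_mul_right_iff hau).1 hux⟩
      (ne_of_mem_of_not_mem' hbx (mt (mem_centralizer_mul_left_iff hxb).1 hba))
  · exact Set.two_le_ncard_of_ne ⟨⟨hcent b, hxb⟩, hab⟩
      ⟨⟨hcent (a * b), (mem_centralizer_mul_left_iff hax).2 hxb⟩,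
        mt (mem_centralizer_mul_left_iff (self_mem_centralizer_singleton a)).1 hab⟩
      (ne_of_mem_of_not_mem' (self_mem_centralizer_singleton b)
        (mt (mem_centralizer_mul_right_iff (self_mem_centralizer_singleton b)).1 hba))
  · exact Set.two_le_ncard_of_ne ⟨⟨hcent u, hxu⟩, hau⟩
      ⟨⟨hcent (x * u), mt (mem_centralizer_mul_left_iff hx).1 hxu⟩,
        (mem_centralizer_mul_left_iff hxa).2 hau⟩
      (ne_of_mem_of_not_mem' (self_mem_centralizer_singleton u)
        (mt (mem_centralizer_mul_right_iff (self_mem_centralizer_singleton u)).1 hux))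
  · exact Set.two_le_ncard_of_ne ⟨⟨hcent (b * u), hxbu⟩, habu⟩
      ⟨⟨hcent (x * (b * u)), mt (mem_centralizer_mul_left_iff hx).1 hxbu⟩,
        mt (mem_centralizer_mul_left_iff hxa).1 habu⟩
      (ne_of_mem_of_not_mem' (self_mem_centralizer_singleton (b * u))
        (mt (mem_centralizer_mul_right_iff (self_mem_centralizer_singleton _)).1
          (mt mem_centralizer_singleton_comm.1 hxbu)))

lemma centralizer_singleton_eq_of_centralizer_mul_eq {x g c c' : G}
    (hle : ∀ c ∈ centralizer {x}, c ∉ center G → centralizer {c} ≤ centralizer {x})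
    (hg : g ∉ centralizer {x}) (hc : c ∈ centralizer {x}) (hc' : c' ∈ centralizer {x})
    (h : centralizer {c * g} = centralizer {c' * g}) : centralizer {c} = centralizer {c'} := by
  have hcc' : c * c'⁻¹ ∈ centralizer {c' * g} := by
    simpa only [mul_inv_rev, mul_assoc, mul_inv_cancel_left] using
      mul_inv_mem_centralizer_of_centralizer_eq h
  by_cases hz : c * c'⁻¹ ∈ center G
  · exact centralizer_singleton_eq_of_mul_inv_mem_center hz
  · have := hle _ (mul_mem hc (inv_mem hc')) hz (mem_centralizer_singleton_comm.1 hcc')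
    exact absurd ((mul_mem_cancel_left hc').1 this) hg

theorem ncard_sep_mem_le_ncard_sep_not_mem (hfin : (Cent G).Finite) {x g : G}
    (hle : ∀ c ∈ centralizer {x}, c ∉ center G → centralizer {c} ≤ centralizer {x})
    (hg : g ∉ centralizer {x}) :
    {D ∈ Cent G | x ∈ D}.ncard ≤ {D ∈ Cent G | x ∉ D}.ncard := by
  have := hfin.to_subtype
  have hrep : ∀ D ∈ {D ∈ Cent G | x ∈ D}, ∃ c ∈ centralizer {x}, centralizer {c} = D := by
    rintro _ ⟨⟨c, rfl⟩, hxc⟩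
    exact ⟨c, mem_centralizer_singleton_comm.1 hxc, rfl⟩
  choose! rep hrep_mem hrep_eq using hrep
  refine Set.ncard_le_ncard_of_injOn (fun D => centralizer {rep D * g}) ?_ ?_
  · intro D hD
    exact ⟨centralizer_singleton_mem_cent _, mt (mem_centralizer_mul_left_iff (hrep_mem D hD)).1
      (mt mem_centralizer_singleton_comm.1 hg)⟩
  · intro D hD D' hD' h
    rw [← hrep_eq D hD, ← hrep_eq D' hD']
    exact centralizer_singleton_eq_of_centralizer_mul_eq hle hg (hrep_mem D hD) (hrep_mem D' hD') h

theorem five_le_ncard_sep_mem (hfin : (Cent G).Finite) {x a b : G} (hx : x ∉ center G)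
    (ha : a ∈ centralizer {x}) (hb : b ∈ centralizer {x}) (hab : b ∉ centralizer {a}) :
    5 ≤ {D ∈ Cent G | x ∈ D}.ncard := by
  have := hfin.to_subtype
  have hxa : x ∈ centralizer {a} := mem_centralizer_singleton_comm.1 ha
  have hxb : x ∈ centralizer {b} := mem_centralizer_singleton_comm.1 hb
  have hba : a ∉ centralizer {b} := mt mem_centralizer_singleton_comm.1 hab
  have hcent := centralizer_singleton_mem_cent (G := G)
  rw [← Set.ncard_sep_add_ncard_sep_not _ (a ∈ ·),
    ← Set.ncard_sep_add_ncard_sep_not {D ∈ {D ∈ Cent G | x ∈ D} | a ∈ D} (b ∈ ·),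
    ← Set.ncard_sep_add_ncard_sep_not {D ∈ {D ∈ Cent G | x ∈ D} | a ∉ D} (b ∈ ·)]
  refine le_trans (le_of_eq (by norm_num : 5 = 2 + 1 + (1 + 1)))
    (add_le_add (add_le_add ?_ ?_) (add_le_add ?_ ?_))
  · exact Set.two_le_ncard_of_ne ⟨⟨⟨top_mem_cent, mem_top x⟩, mem_top a⟩, mem_top b⟩
      ⟨⟨⟨hcent x, self_mem_centralizer_singleton x⟩, ha⟩, hb⟩
      (Ne.symm (mt centralizer_singleton_eq_top_iff.1 hx))
  · exact Set.one_le_ncard_of_mem ⟨⟨⟨hcent a, hxa⟩, self_mem_centralizer_singleton a⟩, hab⟩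
  · exact Set.one_le_ncard_of_mem ⟨⟨⟨hcent b, hxb⟩, hba⟩, self_mem_centralizer_singleton b⟩
  · exact Set.one_le_ncard_of_mem ⟨⟨⟨hcent (a * b), (mem_centralizer_mul_left_iff ha).2 hxb⟩,
      mt (mem_centralizer_mul_left_iff (self_mem_centralizer_singleton a)).1 hba⟩,
      mt (mem_centralizer_mul_right_iff (self_mem_centralizer_singleton b)).1 hab⟩

theorem ten_le_ncard_cent_of_forall_centralizer_le (hfin : (Cent G).Finite) {x a b : G}
    (hx : x ∉ center G) (ha : a ∈ centralizer {x}) (hb : b ∈ centralizer {x})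
    (hab : b ∉ centralizer {a})
    (hle : ∀ c ∈ centralizer {x}, c ∉ center G → centralizer {c} ≤ centralizer {x}) :
    10 ≤ (Cent G).ncard := by
  have := hfin.to_subtype
  obtain ⟨g, -, hg⟩ := SetLike.not_le_iff_exists.1
    (mt top_le_iff.1 (mt centralizer_singleton_eq_top_iff.1 hx))
  have h₁ := five_le_ncard_sep_mem hfin hx ha hb hab
  have h₂ := ncard_sep_mem_le_ncard_sep_not_mem hfin hle hg
  rw [← Set.ncard_sep_add_ncard_sep_not _ (x ∈ ·)]
  omega

theorem ten_le_ncard_cent_of_not_commute (hfin : (Cent G).Finite) {x a b : G}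
    (hx : x ∉ center G) (ha : a ∈ centralizer {x}) (hb : b ∈ centralizer {x})
    (hab : b ∉ centralizer {a}) : 10 ≤ (Cent G).ncard := by
  obtain ⟨_, hxy, ⟨⟨y, rfl⟩, hy⟩, hmax⟩ := (hfin.sep (· ≠ ⊤)).exists_le_maximal
    (a := centralizer {x}) ⟨⟨x, rfl⟩, mt centralizer_singleton_eq_top_iff.1 hx⟩
  by_cases hle : ∀ c ∈ centralizer {y}, c ∉ center G → centralizer {c} ≤ centralizer {y}
  · exact ten_le_ncard_cent_of_forall_centralizer_le hfin
      (mt centralizer_singleton_eq_top_iff.2 hy) (hxy ha) (hxy hb) hab hle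
  · push Not at hle
    obtain ⟨c, hc, hcZ, hcy⟩ := hle
    exact ten_le_ncard_cent_of_not_le_of_not_le hfin hc
      (fun hyc => hcy (hmax ⟨⟨c, rfl⟩, mt centralizer_singleton_eq_top_iff.1 hcZ⟩ hyc)) hcy

end

theorem stmt19 (G : Type*) [Group G] [Finite G] (h : (Cent G).ncard = 9) :
    ∀ x : G, x ∉ Subgroup.center G →
      ∀ a ∈ Subgroup.centralizer {x}, ∀ b ∈ Subgroup.centralizer {x}, a * b = b * a := by
  intro x hx a ha b hb
  by_contra hab
  have := ten_le_ncard_cent_of_not_commute (Set.finite_range _) hx ha hb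
    fun hba => hab (mem_centralizer_singleton_iff.1 hba).symm
  omega
end
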